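/- Let (a_n)_{n≥1} and (c_n)_{n≥1} be sequences of positive real numbers, let γ ≥ 1 be a real number, and let (θ_n) be a bounded sequence of real numbers. Suppose there exists μ ∈ ℝ such that θ_n ≥ (1 − μ)·n^{γ−1} for all sufficiently large n, and suppose a_n/a_{n+1} ≥ 1 + c_{n+1}/n + μ/n + θ_n/n^{γ} for all sufficiently large n. Then the series ∑ c_n a_n converges. -/

import Mathlib

/-!
With `θ n ≥ (1 - μ) n ^ (γ - 1)` the hypothesis on `a n / a (n + 1)` reduces to Kummer's
condition `n a n - (n + 1) a (n + 1) ≥ c (n + 1) a (n + 1)`, so the partial sums of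
`∑ c (n + 1) a (n + 1)` are bounded by a telescoping sum of the nonnegative sequence `n a n`.
-/

open Filter

theorem summable_of_le_sub_succ {f b : ℕ → ℝ} (hf : ∀ n, 0 ≤ f n) (hb : ∀ n, 0 ≤ b n)
    (h : ∀ n, f n ≤ b n - b (n + 1)) : Summable f := by
  refine summable_of_sum_range_le hf (c := b 0) fun m => ?_
  calc ∑ i ∈ Finset.range m, f i ≤ ∑ i ∈ Finset.range m, (b i - b (i + 1)) :=
        Finset.sum_le_sum fun i _ => h i
    _ = b 0 - b m := Finset.sum_range_sub' b m
    _ ≤ b 0 := sub_le_self _ (hb m)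

theorem summable_of_eventually_le_sub_succ {f b : ℕ → ℝ} (hf : ∀ᶠ n in atTop, 0 ≤ f n)
    (hb : ∀ᶠ n in atTop, 0 ≤ b n) (h : ∀ᶠ n in atTop, f n ≤ b n - b (n + 1)) :
    Summable f := by
  obtain ⟨N, hN⟩ := eventually_atTop.1 (hf.and (hb.and h))
  rw [← summable_nat_add_iff N]
  exact summable_of_le_sub_succ (fun n => (hN (n + N) (by omega)).1)
    (fun n => (hN (n + N) (by omega)).2.1)
    (fun n => by simpa only [Nat.add_right_comm n 1 N] using (hN (n + N) (by omega)).2.2)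

theorem le_mul_sub_of_one_add_div_le_div {x y t d : ℝ} (hy : 0 < y) (ht : 0 < t)
    (h : 1 + (d + 1) / t ≤ x / y) : d * y ≤ t * x - (t + 1) * y := by
  have hxy : (1 + (d + 1) / t) * y ≤ x := (le_div_iff₀ hy).1 h
  have hexpand : t * ((1 + (d + 1) / t) * y) = (t + 1) * y + d * y := by
    field_simp
    ring
  nlinarith [mul_le_mul_of_nonneg_left hxy ht.le]

theorem div_le_div_rpow_of_mul_rpow_sub_one_le {t u v γ : ℝ} (ht : 0 < t)
    (h : u * t ^ (γ - 1) ≤ v) : u / t ≤ v / t ^ γ := by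
  have hpow : t ^ (γ - 1) * t = t ^ γ := by
    rw [← Real.rpow_add_one ht.ne', sub_add_cancel]
  rw [div_le_div_iff₀ ht (Real.rpow_pos_of_pos ht γ), ← hpow, ← mul_assoc]
  exact mul_le_mul_of_nonneg_right h ht.le

theorem gauss_mul_convergence_general (a c : ℕ → ℝ) (ha : ∀ n, 1 ≤ n → 0 < a n)
    (hc : ∀ n, 1 ≤ n → 0 < c n) (γ : ℝ)
    (θ : ℕ → ℝ)
    (h : ∃ μ : ℝ,
      (∃ N : ℕ, ∀ n, N ≤ n → (1 - μ) * (n : ℝ) ^ (γ - 1) ≤ θ n) ∧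
      (∃ N : ℕ, ∀ n, N ≤ n → a n / a (n + 1) ≥
        1 + c (n + 1) / (n : ℝ) + μ / (n : ℝ) + θ n / (n : ℝ) ^ γ)) :
    Summable (fun n : ℕ => c (n + 1) * a (n + 1)) := by
  obtain ⟨μ, ⟨N₁, hθ⟩, ⟨N₂, hratio⟩⟩ := h
  refine summable_of_eventually_le_sub_succ (b := fun n => n * a n)
    (Eventually.of_forall fun n => (mul_pos (hc _ n.succ_pos) (ha _ n.succ_pos)).le)
    ((eventually_ge_atTop 1).mono fun n hn => mul_nonneg n.cast_nonneg (ha n hn).le) ?_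
  filter_upwards [eventually_ge_atTop N₁, eventually_ge_atTop N₂, eventually_ge_atTop 1]
    with n hn₁ hn₂ hn
  have hn_pos : (0 : ℝ) < n := by exact_mod_cast hn
  have hθn := div_le_div_rpow_of_mul_rpow_sub_one_le hn_pos (hθ n hn₁)
  push_cast
  refine le_mul_sub_of_one_add_div_le_div (ha _ n.succ_pos) hn_pos ?_
  have hsplit : 1 + (c (n + 1) + 1) / n = 1 + c (n + 1) / n + μ / n + (1 - μ) / n := by ring
  linarith [hratio n hn₂]

/-- Generalized Gauss test, convergence part. -/
theorem gauss_mul_convergence (a c : ℕ → ℝ) (ha : ∀ n, 1 ≤ n → 0 < a n)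
    (hc : ∀ n, 1 ≤ n → 0 < c n) (γ : ℝ) (hγ : 1 ≤ γ)
    (θ : ℕ → ℝ) (hθbdd : ∃ M : ℝ, ∀ n, |θ n| ≤ M)
    (h : ∃ μ : ℝ,
      (∃ N : ℕ, ∀ n, N ≤ n → (1 - μ) * (n : ℝ) ^ (γ - 1) ≤ θ n) ∧
      (∃ N : ℕ, ∀ n, N ≤ n → a n / a (n + 1) ≥
        1 + c (n + 1) / (n : ℝ) + μ / (n : ℝ) + θ n / (n : ℝ) ^ γ)) :
    Summable (fun n : ℕ => c (n + 1) * a (n + 1)) :=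
  gauss_mul_convergence_general a c ha hc γ θ h
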